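/- The graph F4 satisfies γ_e(F4) < γ(F4). -/

import Mathlib

open SimpleGraph

/-- `D` is a dominating set of `G`. -/
def IsDomSet {V : Type*} (G : SimpleGraph V) (D : Finset V) : Prop :=
  ∀ v : V, v ∉ D → ∃ u ∈ D, G.Adj u v

/-- The domination number of `G`. -/
noncomputable def domNum {V : Type*} (G : SimpleGraph V) [Fintype V] : ℕ :=
  sInf {n | ∃ D : Finset V, IsDomSet G D ∧ D.card = n}

open Classical in
/-- `D` contains exactly one endvertex of a path between `u` and `v`. -/
def endCond {V : Type*} (D : Finset V) (u v : V) : Prop :=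
  if u = v then u ∈ D else ((u ∈ D ∧ v ∉ D) ∨ (u ∉ D ∧ v ∈ D))

/-- `dist_{(G,D)}(u,v)`: the minimum length of a path in `G` between `u` and `v` such
that `D` contains exactly one endvertex and no internal vertex of the path;
`⊤` if no such path exists. -/
noncomputable def eDist {V : Type*} (G : SimpleGraph V) (D : Finset V) (u v : V) : ℕ∞ :=
  ⨅ (p : {p : G.Walk u v // p.IsPath ∧ endCond D u v ∧
      ∀ w ∈ p.support, w ≠ u → w ≠ v → w ∉ D}), (p.1.length : ℕ∞)

/-- `(1/2)^(d-1)` for `d : ℕ∞`, with `(1/2)^∞ = 0`. -/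
noncomputable def halfPow (d : ℕ∞) : ℝ :=
  if d = ⊤ then 0 else 2 * (1 / 2 : ℝ) ^ d.toNat

/-- The weight `w_{(G,D)}(u)`. -/
noncomputable def expWeight {V : Type*} (G : SimpleGraph V) (D : Finset V) (u : V) : ℝ :=
  ∑ v ∈ D, halfPow (eDist G D u v)

/-- `D` is an exponential dominating set of `G`. -/
def IsExpDomSet {V : Type*} (G : SimpleGraph V) (D : Finset V) : Prop :=
  ∀ u : V, 1 ≤ expWeight G D u

/-- The exponential domination number of `G`. -/
noncomputable def expDomNum {V : Type*} (G : SimpleGraph V) [Fintype V] : ℕ :=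
  sInf {n | ∃ D : Finset V, IsExpDomSet G D ∧ D.card = n}

/-- `G` is `H`-free: `G` has no induced subgraph isomorphic to `H`. -/
def Free {V W : Type*} (G : SimpleGraph V) (H : SimpleGraph W) : Prop :=
  ¬ Nonempty (H ↪g G)

/-- The graph on `Fin n` with the given edge list. -/
def graphOfList (n : ℕ) (l : List (Fin n × Fin n)) : SimpleGraph (Fin n) :=
  SimpleGraph.fromRel (fun a b => (a, b) ∈ l)

/-- The bull `B`. -/
def bull : SimpleGraph (Fin 5) := graphOfList 5 [(0,1),(1,2),(0,2),(0,3),(1,4)]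
/-- The diamond `D` (`K₄` minus an edge). -/
def diamond : SimpleGraph (Fin 4) := graphOfList 4 [(0,1),(0,2),(0,3),(1,2),(1,3)]
/-- The complete graph `K₄`. -/
def K4 : SimpleGraph (Fin 4) := ⊤
/-- The complete bipartite graph `K_{2,3}` with parts `{0,1}` and `{2,3,4}`. -/
def K23 : SimpleGraph (Fin 5) := graphOfList 5 [(0,2),(0,3),(0,4),(1,2),(1,3),(1,4)]
/-- The 2×3 grid `P₂ □ P₃`. -/
def P2P3 : SimpleGraph (Fin 2 × Fin 3) := (pathGraph 2) □ (pathGraph 3)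
/-- The path on 7 vertices. -/
def P7 : SimpleGraph (Fin 7) := pathGraph 7
/-- The cycle on 7 vertices. -/
def C7 : SimpleGraph (Fin 7) := cycleGraph 7
/-- `F₁`: the path `0-1-2` with pendant vertices `3,4,5` attached to `0,1,2`. -/
def F1 : SimpleGraph (Fin 6) := graphOfList 6 [(0,1),(1,2),(0,3),(1,4),(2,5)]
/-- `F₂`: a 4-cycle with a pendant path on 3 new vertices. -/
def F2 : SimpleGraph (Fin 7) := graphOfList 7 [(0,1),(1,2),(2,3),(3,0),(0,4),(4,5),(5,6)]
/-- `F₃`: a 4-cycle `0-1-2-3` and a 5-cycle `1-2-4-5-6` sharing exactly the edge `1-2`. -/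
def F3 : SimpleGraph (Fin 7) := graphOfList 7 [(0,1),(1,2),(2,3),(3,0),(2,4),(4,5),(5,6),(6,1)]
/-- `F₄`: two 4-cycles sharing exactly the vertex `0`. -/
def F4 : SimpleGraph (Fin 7) := graphOfList 7 [(0,1),(1,2),(2,3),(3,0),(0,4),(4,5),(5,6),(6,0)]
/-- `F₅`: vertices `u=0, v₁=1, v₂=2, w=3, a=4, b=5, z=6`. -/
def F5 : SimpleGraph (Fin 7) := graphOfList 7 [(0,1),(0,2),(1,3),(2,3),(1,4),(4,5),(5,2),(3,6)]

/-!
In `F4` (cut vertex `0`, cycles `0-1-2-3` and `0-4-5-6`) the two vertices `2, 5` opposite the cut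
vertex form an exponential dominating set: each weighs `2` at itself and `1` at its neighbours,
and `0` receives `1/2` from each of them along paths of length two through non-members.
Two vertices never dominate `F4`: the closed neighbourhoods `{1,2,3}` of `2` and `{4,5,6}` of `5`
are disjoint, so a dominating pair has one vertex in each; covering `1, 3` and `4, 6` forces the
pair `{2, 5}`, which misses `0`. This last part is checked by exhaustion.
-/

instance : DecidableRel F4.Adj :=
  inferInstanceAs (DecidableRel (fromRel _).Adj)

instance {V : Type*} [Fintype V] [DecidableEq V] (G : SimpleGraph V) [DecidableRel G.Adj]
    (D : Finset V) : Decidable (IsDomSet G D) := by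
  unfold IsDomSet; infer_instance

lemma le_domNum {V : Type*} [Fintype V] {G : SimpleGraph V} {n : ℕ}
    (h : ∀ D : Finset V, IsDomSet G D → n ≤ D.card) : n ≤ domNum G :=
  le_csInf ⟨_, Finset.univ, fun v hv => absurd (Finset.mem_univ v) hv, rfl⟩
    (by rintro _ ⟨D, hD, rfl⟩; exact h D hD)

lemma expDomNum_le_card {V : Type*} [Fintype V] {G : SimpleGraph V} {D : Finset V}
    (hD : IsExpDomSet G D) : expDomNum G ≤ D.card :=
  Nat.sInf_le ⟨D, hD, rfl⟩

lemma halfPow_nonneg (d : ℕ∞) : 0 ≤ halfPow d := by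
  unfold halfPow; split <;> positivity

lemma halfPow_coe (k : ℕ) : halfPow k = 2 * (1 / 2 : ℝ) ^ k := by
  simp [halfPow]

lemma halfPow_zero : halfPow 0 = 2 := by
  simp [halfPow]

lemma halfPow_one : halfPow 1 = 1 := by
  simp [halfPow]

lemma halfPow_two : halfPow 2 = 1 / 2 := by
  norm_num [halfPow]

lemma halfPow_antitone : Antitone halfPow := by
  intro d e hde
  rcases eq_or_ne e ⊤ with rfl | he
  · exact halfPow_nonneg d
  lift e to ℕ using he
  lift d to ℕ using ne_top_of_le_ne_top (by simp) hde
  rw [halfPow_coe, halfPow_coe]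
  have := pow_le_pow_of_le_one (by norm_num : (0 : ℝ) ≤ 1 / 2) (by norm_num)
    (by exact_mod_cast hde : d ≤ e)
  linarith

section ExpWeight

variable {V : Type*} {G : SimpleGraph V} {D : Finset V}

lemma eDist_le_length {u v : V} (p : G.Walk u v) (hp : p.IsPath) (hc : endCond D u v)
    (hi : ∀ w ∈ p.support, w ≠ u → w ≠ v → w ∉ D) : eDist G D u v ≤ p.length :=
  iInf_le_of_le ⟨p, hp, hc, hi⟩ le_rfl

lemma endCond_of_notMem_of_mem {u v : V} (hu : u ∉ D) (hv : v ∈ D) : endCond D u v := by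
  have huv : u ≠ v := by rintro rfl; exact hu hv
  simp [endCond, huv, hu, hv]

lemma eDist_self_eq_zero {u : V} (hu : u ∈ D) : eDist G D u u = 0 :=
  nonpos_iff_eq_zero.mp <| eDist_le_length .nil (by simp) (by simp [endCond, hu]) (by simp)

lemma eDist_le_one_of_adj {u v : V} (hu : u ∉ D) (hv : v ∈ D) (huv : G.Adj u v) :
    eDist G D u v ≤ 1 :=
  eDist_le_length (huv.toWalk) (by simp [huv.ne]) (endCond_of_notMem_of_mem hu hv)
    (by simp +contextual)

lemma eDist_le_two_of_adj_adj {u w v : V} (hu : u ∉ D) (hw : w ∉ D) (hv : v ∈ D)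
    (huw : G.Adj u w) (hwv : G.Adj w v) : eDist G D u v ≤ 2 := by
  have huv : u ≠ v := by rintro rfl; exact hu hv
  refine eDist_le_length (.cons huw (.cons hwv .nil)) ?_ (endCond_of_notMem_of_mem hu hv) ?_
  · simp [huw.ne, huv, hwv.ne]
  · simp +contextual [hw]

lemma halfPow_eDist_le_expWeight {u v : V} (hv : v ∈ D) :
    halfPow (eDist G D u v) ≤ expWeight G D u :=
  Finset.single_le_sum (fun _ _ => halfPow_nonneg _) hv

lemma isExpDomSet_of_forall_mem_or_near [DecidableEq V]
    (h : ∀ u, u ∈ D ∨ (∃ v ∈ D, G.Adj u v) ∨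
      ∃ v₁ ∈ D, ∃ v₂ ∈ D, v₁ ≠ v₂ ∧ ∃ w₁ ∉ D, ∃ w₂ ∉ D,
        G.Adj u w₁ ∧ G.Adj w₁ v₁ ∧ G.Adj u w₂ ∧ G.Adj w₂ v₂) :
    IsExpDomSet G D := by
  intro u
  by_cases hu : u ∈ D
  · calc (1 : ℝ) ≤ halfPow 0 := by rw [halfPow_zero]; norm_num
      _ = halfPow (eDist G D u u) := by rw [eDist_self_eq_zero hu]
      _ ≤ expWeight G D u := halfPow_eDist_le_expWeight hu
  rcases (h u).resolve_left hu with
    ⟨v, hv, huv⟩ | ⟨v₁, hv₁, v₂, hv₂, hne, w₁, hw₁, w₂, hw₂, h₁, h₁', h₂, h₂'⟩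
  · calc (1 : ℝ) = halfPow 1 := halfPow_one.symm
      _ ≤ halfPow (eDist G D u v) := halfPow_antitone (eDist_le_one_of_adj hu hv huv)
      _ ≤ expWeight G D u := halfPow_eDist_le_expWeight hv
  · calc (1 : ℝ) = halfPow 2 + halfPow 2 := by norm_num [halfPow_two]
      _ ≤ halfPow (eDist G D u v₁) + halfPow (eDist G D u v₂) :=
        add_le_add (halfPow_antitone (eDist_le_two_of_adj_adj hu hw₁ hv₁ h₁ h₁'))
          (halfPow_antitone (eDist_le_two_of_adj_adj hu hw₂ hv₂ h₂ h₂'))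
      _ = ∑ v ∈ {v₁, v₂}, halfPow (eDist G D u v) :=
        (Finset.sum_pair (f := fun v => halfPow (eDist G D u v)) hne).symm
      _ ≤ expWeight G D u :=
        Finset.sum_le_sum_of_subset_of_nonneg (by simp [Finset.insert_subset_iff, hv₁, hv₂])
          (fun _ _ _ => halfPow_nonneg _)

end ExpWeight

lemma isExpDomSet_F4 : IsExpDomSet F4 {2, 5} :=
  isExpDomSet_of_forall_mem_or_near (by decide)

set_option maxRecDepth 20000 in
lemma three_le_card_of_isDomSet_F4 (D : Finset (Fin 7)) (hD : IsDomSet F4 D) : 3 ≤ D.card := by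
  revert D; decide

/-- `γₑ(F₄) < γ(F₄)`. -/
theorem expDomNum_F4_lt_domNum_F4 : expDomNum F4 < domNum F4 :=
  calc expDomNum F4 ≤ 2 := expDomNum_le_card isExpDomSet_F4
    _ < 3 := by norm_num
    _ ≤ domNum F4 := le_domNum three_le_card_of_isDomSet_F4
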